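/- arXiv:2106.10078 — 2 statements merged into one kernel-verified Lean document; each statement's English description precedes it below -/
import Mathlib

section
/- Let X be a topological space and Y a metric space with a countable dense subset. If D ⊆ X × Y is open and dense in the product topology, then the set of points x ∈ X such that the slice D_x = {y ∈ Y : (x,y) ∈ D} is dense in Y is a residual (comeager) subset of X. -/
/-- If `X` is a topological space, `Y` a metric space with a countable dense subset,
and `D ⊆ X × Y` is open and dense, then the set of `x` such that the slice
`{y | (x, y) ∈ D}` is dense in `Y` is residual (comeager) in `X`. -/
theorem dense_slices_residual {X Y : Type*} [TopologicalSpace X] [MetricSpace Y]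
    (s : Set Y) (hs : s.Countable) (hsd : Dense s)
    (D : Set (X × Y)) (hD : IsOpen D) (hDd : Dense D) :
    {x : X | Dense {y : Y | (x, y) ∈ D}} ∈ residual X := by
  -- For each `y₀ ∈ s` and `n`, the set of `x` whose slice meets `ball y₀ (1/(n+1))`
  -- is open and dense.
  set U : Y → ℕ → Set X := fun y₀ n => {x | ∃ y, dist y y₀ < 1 / (n + 1) ∧ (x, y) ∈ D}
  have hUopen : ∀ y₀ n, IsOpen (U y₀ n) := by
    intro y₀ n
    rw [isOpen_iff_mem_nhds]
    rintro x ⟨y, hy, hxy⟩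
    have := hD.mem_nhds hxy
    rw [nhds_prod_eq, Filter.mem_prod_iff] at this
    obtain ⟨V, hV, W, hW, hVW⟩ := this
    filter_upwards [hV] with x' hx'
    exact ⟨y, hy, hVW ⟨hx', mem_of_mem_nhds hW⟩⟩
  have hpos : ∀ n : ℕ, (0 : ℝ) < 1 / (n + 1) := fun n => by positivity
  have hUdense : ∀ y₀ n, Dense (U y₀ n) := by
    intro y₀ n
    intro x
    rw [mem_closure_iff]
    intro V hV hxV
    have : ((V ×ˢ Metric.ball y₀ (1 / (n + 1))) ∩ D).Nonempty := by
      refine hDd.inter_open_nonempty _ (hV.prod Metric.isOpen_ball) ?_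
      exact ⟨(x, y₀), hxV, Metric.mem_ball_self (hpos n)⟩
    obtain ⟨⟨x', y'⟩, ⟨hx', hy'⟩, hD'⟩ := this
    exact ⟨x', hx', y', hy', hD'⟩
  have hmem : (⋂ y₀ ∈ s, ⋂ n : ℕ, U y₀ n) ∈ residual X := by
    refine (countable_bInter_mem hs).mpr fun y₀ _ => ?_
    exact countable_iInter_mem.mpr fun n =>
      residual_of_dense_open (hUopen y₀ n) (hUdense y₀ n)
  refine Filter.mem_of_superset hmem ?_
  intro x hx
  simp only [Set.mem_iInter] at hx
  rw [Set.mem_setOf_eq, Metric.dense_iff]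
  intro y r hr
  obtain ⟨y₀, hy₀s, hy₀⟩ := Metric.mem_closure_iff.mp (hsd y) (r / 2) (by linarith)
  obtain ⟨n, hn⟩ := exists_nat_one_div_lt (show (0:ℝ) < r / 2 by linarith)
  obtain ⟨y', hy', hD'⟩ := hx y₀ hy₀s n
  refine ⟨y', ?_, hD'⟩
  have : dist y' y ≤ dist y' y₀ + dist y₀ y := dist_triangle _ _ _
  rw [dist_comm y y₀] at hy₀
  exact Metric.mem_ball.mpr (by linarith [hy'.trans hn])
end

section
/- Let X be a topological space, Y a metric space, y : ℕ → Y a dense sequence, and D ⊆ X × Y open and dense. For each n, let B_n be the open ball of radius 1/(n+1) about y_n and let D^{B_n} = {x ∈ X : ({x} × B_n) ∩ D ≠ ∅}. Then each D^{B_n} is open and dense in X. -/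
/-- Let `X` be a topological space, `Y` a metric space with a dense sequence `y`,
and `D ⊆ X × Y` open and dense.  For each `n`, the set
`D^{B_n} = {x | ({x} × B_n) ∩ D ≠ ∅}`, with `B_n` the ball of radius `1/(n+1)`
around `y n`, is open and dense in `X`. -/
theorem slices_meet_ball_open_dense {X Y : Type*} [TopologicalSpace X] [MetricSpace Y]
    (y : ℕ → Y) (hy : DenseRange y)
    (D : Set (X × Y)) (hD : IsOpen D) (hDd : Dense D) (n : ℕ) :
    IsOpen {x : X | ∃ z ∈ Metric.ball (y n) (1 / (n + 1)), (x, z) ∈ D} ∧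
      Dense {x : X | ∃ z ∈ Metric.ball (y n) (1 / (n + 1)), (x, z) ∈ D} := by
  have hpos : (0 : ℝ) < 1 / (n + 1) := by positivity
  have hset : {x : X | ∃ z ∈ Metric.ball (y n) (1 / (n + 1)), (x, z) ∈ D} =
      Prod.fst '' (D ∩ Set.univ ×ˢ Metric.ball (y n) (1 / (n + 1))) := by
    ext x
    constructor
    · rintro ⟨z, hz, hzD⟩
      exact ⟨(x, z), ⟨hzD, Set.mem_univ _, hz⟩, rfl⟩
    · rintro ⟨⟨a, b⟩, ⟨hab, -, hb⟩, rfl⟩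
      exact ⟨b, hb, hab⟩
  constructor
  · rw [hset]
    exact isOpenMap_fst _ (hD.inter (isOpen_univ.prod Metric.isOpen_ball))
  · rw [dense_iff_inter_open]
    intro U hU hUne
    obtain ⟨x, hx⟩ := hUne
    have hbox : (U ×ˢ Metric.ball (y n) (1 / (n + 1))).Nonempty :=
      ⟨(x, y n), hx, Metric.mem_ball_self hpos⟩
    obtain ⟨⟨a, b⟩, hab⟩ := hDd.inter_open_nonempty _ (hU.prod Metric.isOpen_ball) hbox
    exact ⟨a, hab.1.1, b, hab.1.2, hab.2⟩
end
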